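/- Let (V,E) and (W,F) be Bratteli diagrams with embeddings ξ, ξ⁰, ξ¹ as specified, and let R = R_E ∪ ⋃_{n≥1} ⋃_{(p,q)∈I_n^W} (δ^{1,0}_{p,q} ∪ δ^{0,1}_{q,p}). A Borel probability measure μ on X_E is R-invariant if and only if it is R_E-invariant. -/

import Mathlib

open MeasureTheory

structure Bratteli where
  V : ℕ → Type
  E : ℕ → Type
  src : (n : ℕ) → E n → V n
  tgt : (n : ℕ) → E n → V (n + 1)
  V_finite : ∀ n, Finite (V n)
  V_nonempty : ∀ n, Nonempty (V n)
  V0_subsingleton : Subsingleton (V 0)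
  E_finite : ∀ n, Finite (E n)
  E_nonempty : ∀ n, Nonempty (E n)

namespace Bratteli

variable (D : Bratteli)

instance (n : ℕ) : Finite (D.E n) := D.E_finite n
instance (n : ℕ) : Finite (D.V n) := D.V_finite n
instance (n : ℕ) : TopologicalSpace (D.E n) := ⊥
instance (n : ℕ) : DiscreteTopology (D.E n) := ⟨rfl⟩

/-- The infinite path space `X_E`.  Coordinate `k` corresponds to the edge `x_{k+1}`
of the paper, lying in the edge set `E_{k+1}` (between vertex levels `k` and `k+1`). -/
def X : Type := { x : (n : ℕ) → D.E n // ∀ n, D.tgt n (x n) = D.src (n + 1) (x (n + 1)) }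

instance : TopologicalSpace D.X :=
  inferInstanceAs (TopologicalSpace
    { x : (n : ℕ) → D.E n // ∀ n, D.tgt n (x n) = D.src (n + 1) (x (n + 1)) })

/-- `p` (a full choice of one edge at every level) is a finite path of length `n`
when restricted to its first `n` coordinates, i.e. coordinates `0,…,n-1` are
composable.  A path of length `n` represents an element of `E_{0,n}` of the paper. -/
def IsPath (n : ℕ) (p : (k : ℕ) → D.E k) : Prop :=
  ∀ k, k + 1 < n → D.tgt k (p k) = D.src (k + 1) (p (k + 1))

/-- The cylinder set `U(p)` determined by the first `n` coordinates of `p`. -/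
def cyl (n : ℕ) (p : (k : ℕ) → D.E k) : Set D.X :=
  { x | ∀ k, k < n → x.1 k = p k }

/-- The set `β_{p,q}` for `p, q ∈ E_{0,n}`. -/
def beta (n : ℕ) (p q : (k : ℕ) → D.E k) : Set (D.X × D.X) :=
  { z | (∀ k, k < n → z.1.1 k = p k ∧ z.2.1 k = q k) ∧ ∀ k, n ≤ k → z.1.1 k = z.2.1 k }

/-- Tail equivalence `R_E`. -/
def RE : Set (D.X × D.X) :=
  ⋃ (n : ℕ) (p : (k : ℕ) → D.E k) (q : (k : ℕ) → D.E k)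
    (_ : D.IsPath (n + 1) p) (_ : D.IsPath (n + 1) q)
    (_ : D.tgt n (p n) = D.tgt n (q n)), D.beta (n + 1) p q

instance : MeasurableSpace D.X := borel D.X

/-- A (Borel) measure `μ` is invariant for a relation `S ⊆ X × X` if for every
Borel subset `U ⊆ S` on which both coordinate projections are injective, the
images of `U` under the two projections have the same measure. -/
def Invariant (μ : Measure D.X) (S : Set (D.X × D.X)) : Prop :=
  ∀ U : Set (D.X × D.X), U ⊆ S → MeasurableSet U →
    Set.InjOn Prod.fst U → Set.InjOn Prod.snd U →
    μ (Prod.fst '' U) = μ (Prod.snd '' U)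

end Bratteli

/-- The inverse of a relation. -/
def relInv {α : Type*} (S : Set (α × α)) : Set (α × α) := { z | (z.2, z.1) ∈ S }

/-- Composition of relations: `S ∘ T = {(x,y) : ∃ z, (x,z) ∈ S, (z,y) ∈ T}`. -/
def relComp {α : Type*} (S T : Set (α × α)) : Set (α × α) :=
  { z | ∃ w, (z.1, w) ∈ S ∧ (w, z.2) ∈ T }

/-- A pair of disjoint embeddings `ξ⁰, ξ¹` of a Bratteli diagram `(W,F)` (here `B`)
into a Bratteli diagram `(V,E)` (here `D`), over a common vertex embedding `ξ`. -/
structure BratteliEmb (B D : Bratteli) where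
  xiV : (n : ℕ) → B.V n → D.V n
  xi0 : (n : ℕ) → B.E n → D.E n
  xi1 : (n : ℕ) → B.E n → D.E n
  xiV_inj : ∀ n, Function.Injective (xiV n)
  xi0_inj : ∀ n, Function.Injective (xi0 n)
  xi1_inj : ∀ n, Function.Injective (xi1 n)
  src_xi0 : ∀ n (f : B.E n), D.src n (xi0 n f) = xiV n (B.src n f)
  tgt_xi0 : ∀ n (f : B.E n), D.tgt n (xi0 n f) = xiV (n + 1) (B.tgt n f)
  src_xi1 : ∀ n (f : B.E n), D.src n (xi1 n f) = xiV n (B.src n f)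
  tgt_xi1 : ∀ n (f : B.E n), D.tgt n (xi1 n f) = xiV (n + 1) (B.tgt n f)
  disjoint01 : ∀ n (f g : B.E n), xi0 n f ≠ xi1 n g

namespace BratteliEmb

variable {B D : Bratteli} (E : BratteliEmb B D)

/-- The set `λ^{1,0}_{p,q}` for `(p,q) ∈ I_n^W` (paths of length `n+1`): pairs whose first
`n+1` coordinates are `p` resp. `q`, and whose remaining coordinates run through
`ξ¹(f_k)` resp. `ξ⁰(f_k)` for a common infinite path `(f_k)` of `(W,F)`. -/
def lam (n : ℕ) (p q : (k : ℕ) → D.E k) : Set (D.X × D.X) :=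
  { z | (∀ k, k < n + 1 → z.1.1 k = p k ∧ z.2.1 k = q k) ∧
        ∀ k, n + 1 ≤ k → ∃ f : B.E k, z.1.1 k = E.xi1 k f ∧ z.2.1 k = E.xi0 k f }

/-- The set `δ^{1,0}_{p,q}` for `(p,q) ∈ I_n^W`: the union of `λ^{1,0}_{p,q}` with the pairs
which, after a finite common block of `(ξ¹,ξ⁰)`-matched edges, either swap to a
`(ξ⁰,ξ¹)`-matched edge and then agree, or meet a common edge outside
`ξ⁰(F) ∪ ξ¹(F)` and then agree. -/
def delta (n : ℕ) (p q : (k : ℕ) → D.E k) : Set (D.X × D.X) :=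
  E.lam n p q ∪
  { z | (∀ k, k < n + 1 → z.1.1 k = p k ∧ z.2.1 k = q k) ∧
        ∃ m : ℕ,
          (∀ k, n + 1 ≤ k → k ≤ n + 1 + m →
            ∃ f : B.E k, z.1.1 k = E.xi1 k f ∧ z.2.1 k = E.xi0 k f) ∧
          (∃ f : B.E (n + m + 2), z.1.1 (n + m + 2) = E.xi0 (n + m + 2) f ∧
            z.2.1 (n + m + 2) = E.xi1 (n + m + 2) f) ∧
          (∀ k, n + m + 2 < k → z.1.1 k = z.2.1 k) } ∪
  { z | (∀ k, k < n + 1 → z.1.1 k = p k ∧ z.2.1 k = q k) ∧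
        ∃ m : ℕ,
          (∀ k, n + 1 ≤ k → k ≤ n + 1 + m →
            ∃ f : B.E k, z.1.1 k = E.xi1 k f ∧ z.2.1 k = E.xi0 k f) ∧
          (∀ f : B.E (n + m + 2), z.1.1 (n + m + 2) ≠ E.xi0 (n + m + 2) f ∧
            z.1.1 (n + m + 2) ≠ E.xi1 (n + m + 2) f) ∧
          (∀ k, n + m + 2 ≤ k → z.1.1 k = z.2.1 k) }

/-- The equivalence relation `R`, generated by `R_E` together with all
`δ^{1,0}_{p,q}` and `δ^{0,1}_{q,p}` for `(p,q) ∈ I_n^W`, `n ≥ 1`. -/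
def Rfull : Set (D.X × D.X) :=
  D.RE ∪
  ⋃ (n : ℕ) (p : (k : ℕ) → D.E k) (q : (k : ℕ) → D.E k)
    (_ : D.IsPath (n + 1) p) (_ : D.IsPath (n + 1) q)
    (_ : D.tgt n (p n) = D.tgt n (q n))
    (_ : ∃ w : B.V (n + 1), D.tgt n (p n) = E.xiV (n + 1) w),
    (E.delta n p q ∪ relInv (E.delta n p q))

/-- The compact open subrelation `R_n` (`n+1` in the indexing of the paper). -/
def Rn (n : ℕ) : Set (D.X × D.X) :=
  (⋃ (p : (k : ℕ) → D.E k) (q : (k : ℕ) → D.E k)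
    (_ : D.IsPath (n + 1) p) (_ : D.IsPath (n + 1) q)
    (_ : D.tgt n (p n) = D.tgt n (q n)), D.beta (n + 1) p q) ∪
  ⋃ (p : (k : ℕ) → D.E k) (q : (k : ℕ) → D.E k)
    (_ : D.IsPath (n + 1) p) (_ : D.IsPath (n + 1) q)
    (_ : D.tgt n (p n) = D.tgt n (q n))
    (_ : ∃ w : B.V (n + 1), D.tgt n (p n) = E.xiV (n + 1) w),
    (E.delta n p q ∪ relInv (E.delta n p q))

end BratteliEmb

/-!
The inclusion `R_E ⊆ R` gives one direction. Conversely, the pairs of `δ^{1,0}_{p,q}` outside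
`λ^{1,0}_{p,q}` are tail equivalent, and every pair of `λ^{1,0}_{p,q}` factors as the swap `φ_N`,
which replaces a tail `ξ¹(f_N), ξ¹(f_{N+1}), …` by `ξ⁰(f_N), ξ⁰(f_{N+1}), …`, followed by a
tail-equivalent step. So it suffices that an `R_E`-invariant measure is invariant under `φ_N`.
The finite swaps of the coordinates `N, …, m` lie in `R_E`; for compact `K` the images of `K` under
the closed relations "swapped on `N, …, m`, arbitrary beyond `m`" decrease to `φ_N K`, whence
`μ K ≤ μ (φ_N K)`. Inner regularity and the symmetry `ξ⁰ ↔ ξ¹` turn this into an equality.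
-/

open Set MeasureTheory

lemma SetRel.isCompact_image {α β : Type*} [TopologicalSpace α] [TopologicalSpace β]
    [CompactSpace β] {H : SetRel α β} (hH : IsClosed H) {K : Set α} (hK : IsCompact K) :
    IsCompact (SetRel.image H K) := by
  have : H.image K = Prod.snd '' (H ∩ K ×ˢ univ) := by
    ext y
    simp [SetRel.image, and_comm]
  rw [this]
  exact ((hK.prod isCompact_univ).inter_left hH).image continuous_snd

lemma SetRel.iInter_image_subset_image_iInter {α β : Type*} [TopologicalSpace α] [T2Space α]
    [TopologicalSpace β] {H : ℕ → SetRel α β} (hH : Antitone H) (hHc : ∀ m, IsClosed (H m))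
    {K : Set α} (hK : IsCompact K) : ⋂ m, SetRel.image (H m) K ⊆ SetRel.image (⋂ m, H m) K := by
  intro y hy
  set t : ℕ → Set α := fun m => K ∩ (fun x => (x, y)) ⁻¹' H m
  have htc (m : ℕ) : IsClosed (t m) := hK.isClosed.inter ((hHc m).preimage (by fun_prop))
  have htn (m : ℕ) : (t m).Nonempty := by
    obtain ⟨x, hxK, hxy⟩ := mem_iInter.1 hy m
    exact ⟨x, hxK, hxy⟩
  obtain ⟨x, hx⟩ := IsCompact.nonempty_iInter_of_sequence_nonempty_isCompact_isClosed t
    (fun m => inter_subset_inter_right _ (Set.preimage_mono (f := fun x => (x, y)) (hH m.le_succ)))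
    htn
    (hK.inter_right ((hHc 0).preimage (by fun_prop))) htc
  rw [mem_iInter] at hx
  exact ⟨x, (hx 0).1, mem_iInter.2 fun m => (hx m).2⟩

lemma measure_image_iUnion_of_injOn {α β ι : Type*} [TopologicalSpace α] [PolishSpace α]
    [MeasurableSpace α] [BorelSpace α] [TopologicalSpace β] [T2Space β] [MeasurableSpace β]
    [OpensMeasurableSpace β] [Countable ι] {ν : Measure β} {f : α → β} (hf : Continuous f)
    {V : ι → Set α} (hVm : ∀ i, MeasurableSet (V i)) (hV : Pairwise (Function.onFun Disjoint V))
    (hinj : InjOn f (⋃ i, V i)) : ν (f '' ⋃ i, V i) = ∑' i, ν (f '' V i) := by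
  rw [image_iUnion]
  refine measure_iUnion (fun i j hij => ?_) fun i =>
    (hVm i).image_of_continuousOn_injOn hf.continuousOn (hinj.mono (subset_iUnion V i))
  rw [Function.onFun, disjoint_iff_inter_eq_empty,
    ← hinj.image_inter (subset_iUnion V i) (subset_iUnion V j),
    disjoint_iff_inter_eq_empty.1 (hV hij), image_empty]

lemma image_fst_relComp_relInv {α : Type*} (S U : Set (α × α)) :
    Prod.fst '' relComp (relInv S) U = SetRel.image S (Prod.fst '' U) := by
  ext w
  constructor
  · rintro ⟨⟨w, y⟩, ⟨x, hxw, hxy⟩, rfl⟩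
    exact ⟨x, ⟨(x, y), hxy, rfl⟩, hxw⟩
  · rintro ⟨x, ⟨⟨x, y⟩, hxy, rfl⟩, hxw⟩
    exact ⟨(w, y), ⟨x, hxw, hxy⟩, rfl⟩

lemma image_snd_relComp_relInv {α : Type*} {S U : Set (α × α)}
    (h : Prod.fst '' U ⊆ Prod.fst '' S) : Prod.snd '' relComp (relInv S) U = Prod.snd '' U := by
  ext y
  constructor
  · rintro ⟨⟨w, y⟩, ⟨x, -, hxy⟩, rfl⟩
    exact ⟨(x, y), hxy, rfl⟩
  · rintro ⟨⟨x, y⟩, hxy, rfl⟩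
    obtain ⟨⟨x, w⟩, hxw, rfl⟩ := h ⟨(x, y), hxy, rfl⟩
    exact ⟨(w, y), ⟨x, hxw, hxy⟩, rfl⟩

lemma measurableSet_relComp {α : Type*} [TopologicalSpace α] [PolishSpace α]
    [MeasurableSpace α] [BorelSpace α] {P Q : Set (α × α)} (hP : MeasurableSet P)
    (hQ : MeasurableSet Q) (hPinj : InjOn Prod.fst P) : MeasurableSet (relComp P Q) := by
  have hcomp : relComp P Q = (fun t : (α × α) × (α × α) => (t.1.1, t.2.2)) ''
      ((P ×ˢ Q) ∩ {t | t.1.2 = t.2.1}) := by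
    ext ⟨a, c⟩
    simp only [relComp, mem_ofPred_eq, mem_image, mem_inter_iff, mem_prod, Prod.exists,
      Prod.mk.injEq]
    constructor
    · rintro ⟨b, hab, hbc⟩
      exact ⟨a, b, b, c, ⟨⟨hab, hbc⟩, rfl⟩, rfl, rfl⟩
    · rintro ⟨a, b, b', c, ⟨⟨hab, hbc⟩, rfl⟩, rfl, rfl⟩
      exact ⟨b, hab, hbc⟩
  rw [hcomp]
  refine ((hP.prod hQ).inter (isClosed_eq (by fun_prop) (by fun_prop)).measurableSet)
    |>.image_of_continuousOn_injOn (by fun_prop) ?_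
  rintro ⟨s, t⟩ ⟨⟨hs, ht⟩, hst⟩ ⟨s', t'⟩ ⟨⟨hs', ht'⟩, hst'⟩ h
  simp only [mem_ofPred_eq, Prod.mk.injEq] at hst hst' h
  have hss' : s = s' := hPinj hs hs' h.1
  subst hss'
  exact Prod.ext rfl (Prod.ext (hst.symm.trans hst') h.2)

namespace Bratteli

variable {D : Bratteli}

lemma isClosed_setOf_isPath (D : Bratteli) :
    IsClosed {x : (n : ℕ) → D.E n | ∀ n, D.tgt n (x n) = D.src (n + 1) (x (n + 1))} := by
  simp only [ofPred_forall]
  exact isClosed_iInter fun n =>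
    IsClosed.preimage (f := fun x : (n : ℕ) → D.E n => (x n, x (n + 1))) (by fun_prop)
      (isClosed_discrete {e : D.E n × D.E (n + 1) | D.tgt n e.1 = D.src (n + 1) e.2})

instance : CompactSpace D.X :=
  isCompact_iff_compactSpace.mp (D.isClosed_setOf_isPath.isCompact)

instance : PolishSpace D.X := D.isClosed_setOf_isPath.polishSpace

instance : BorelSpace D.X := ⟨rfl⟩

lemma continuous_apply_val (k : ℕ) : Continuous fun x : D.X => x.1 k :=
  (continuous_apply k).comp continuous_subtype_val

lemma isClosed_setOf_forall_coord (P : ∀ k, D.E k → D.E k → Prop) :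
    IsClosed {z : D.X × D.X | ∀ k, P k (z.1.1 k) (z.2.1 k)} := by
  simp only [ofPred_forall]
  exact isClosed_iInter fun k =>
    IsClosed.preimage (f := fun z : D.X × D.X => (z.1.1 k, z.2.1 k))
      (((continuous_apply_val k).comp continuous_fst).prodMk
        ((continuous_apply_val k).comp continuous_snd))
      (isClosed_discrete {e : D.E k × D.E k | P k e.1 e.2})

lemma mem_RE_iff {z : D.X × D.X} : z ∈ D.RE ↔ ∃ n, ∀ k, n ≤ k → z.1.1 k = z.2.1 k := by
  simp only [RE, beta, mem_iUnion, mem_ofPred_eq]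
  constructor
  · rintro ⟨n, p, q, -, -, -, -, h⟩
    exact ⟨n + 1, h⟩
  · rintro ⟨n, h⟩
    refine ⟨n, z.1.1, z.2.1, fun k _ => z.1.2 k, fun k _ => z.2.2 k, ?_,
      fun k _ => ⟨rfl, rfl⟩, fun k hk => h k (by omega)⟩
    rw [z.1.2 n, z.2.2 n, h (n + 1) (by omega)]

lemma measurableSet_RE : MeasurableSet D.RE := by
  have : D.RE = ⋃ n, {z : D.X × D.X | ∀ k, n ≤ k → z.1.1 k = z.2.1 k} := by
    ext z
    simp only [mem_RE_iff, mem_iUnion, mem_ofPred_eq]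
  rw [this]
  exact .iUnion fun n => (isClosed_setOf_forall_coord fun k a b => n ≤ k → a = b).measurableSet

lemma relInv_RE_subset : relInv D.RE ⊆ D.RE := fun _ hz =>
  let ⟨n, h⟩ := mem_RE_iff.1 hz
  mem_RE_iff.2 ⟨n, fun k hk => (h k hk).symm⟩

variable {μ : Measure D.X} {S T : Set (D.X × D.X)}

lemma Invariant.mono (hT : D.Invariant μ T) (hST : S ⊆ T) : D.Invariant μ S :=
  fun U hU => hT U (hU.trans hST)

lemma Invariant.relInv (hS : D.Invariant μ S) : D.Invariant μ (relInv S) := by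
  intro U hU hm h1 h2
  have := hS (Prod.swap '' U) (by rintro _ ⟨z, hz, rfl⟩; exact hU hz)
    (by rw [image_swap_eq_preimage_swap]; exact hm.preimage measurable_swap)
    (InjOn.image_of_comp (g := Prod.fst) h2) (InjOn.image_of_comp (g := Prod.snd) h1)
  simpa only [image_image, Prod.fst_swap, Prod.snd_swap] using this.symm

lemma Invariant.iUnion_nat {T : ℕ → Set (D.X × D.X)} (hTm : ∀ i, MeasurableSet (T i))
    (hT : ∀ i, D.Invariant μ (T i)) : D.Invariant μ (⋃ i, T i) := by
  intro U hU hUm h1 h2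
  have hUV : U = ⋃ i, U ∩ disjointed T i := by
    rw [← inter_iUnion, iUnion_disjointed, inter_eq_left.2 hU]
  have hVm (i : ℕ) : MeasurableSet (U ∩ disjointed T i) := hUm.inter (.disjointed hTm i)
  have hV : Pairwise (Function.onFun Disjoint fun i => U ∩ disjointed T i) := fun i j hij =>
    (disjoint_disjointed T hij).mono inter_subset_right inter_subset_right
  rw [hUV] at h1 h2 ⊢
  rw [measure_image_iUnion_of_injOn continuous_fst hVm hV h1,
    measure_image_iUnion_of_injOn continuous_snd hVm hV h2]
  exact tsum_congr fun i => hT i _ (inter_subset_right.trans (disjointed_subset T i)) (hVm i)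
    (h1.mono (subset_iUnion (fun i => U ∩ disjointed T i) i))
    (h2.mono (subset_iUnion (fun i => U ∩ disjointed T i) i))

lemma Invariant.iUnion {ι : Type*} [Countable ι] {T : ι → Set (D.X × D.X)}
    (hTm : ∀ i, MeasurableSet (T i)) (hT : ∀ i, D.Invariant μ (T i)) :
    D.Invariant μ (⋃ i, T i) := by
  rcases isEmpty_or_nonempty ι with hι | hι
  · intro U hU _ _ _
    rw [iUnion_of_empty, subset_empty_iff] at hU
    simp [hU]
  · obtain ⟨g, hg⟩ := exists_surjective_nat ι
    rw [← hg.iUnion_comp]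
    exact Invariant.iUnion_nat (fun n => hTm (g n)) fun n => hT (g n)

lemma Invariant.union (hS : D.Invariant μ S) (hT : D.Invariant μ T) (hSm : MeasurableSet S)
    (hTm : MeasurableSet T) : D.Invariant μ (S ∪ T) := by
  rw [union_eq_iUnion]
  exact .iUnion (Bool.forall_bool.2 ⟨hTm, hSm⟩) (Bool.forall_bool.2 ⟨hT, hS⟩)

lemma Invariant.measure_image (hS : D.Invariant μ S) (hSm : MeasurableSet S)
    (h1 : InjOn Prod.fst S) (h2 : InjOn Prod.snd S) {A : Set D.X} (hA : MeasurableSet A)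
    (hAS : A ⊆ Prod.fst '' S) : μ (SetRel.image S A) = μ A := by
  set V := S ∩ Prod.fst ⁻¹' A
  have hfst : Prod.fst '' V = A := by rw [image_inter_preimage, inter_eq_right.2 hAS]
  have hsnd : Prod.snd '' V = SetRel.image S A := by
    ext y
    simp [V, SetRel.image, and_comm]
  calc μ (SetRel.image S A) = μ (Prod.snd '' V) := by rw [hsnd]
    _ = μ (Prod.fst '' V) :=
      (hS V inter_subset_left (hSm.inter (measurable_fst hA)) (h1.mono inter_subset_left)
        (h2.mono inter_subset_left)).symm
    _ = μ A := by rw [hfst]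

lemma Invariant.relComp (hS : D.Invariant μ S) (hSm : MeasurableSet S)
    (hS1 : InjOn Prod.fst S) (hS2 : InjOn Prod.snd S) (hT : D.Invariant μ T) :
    D.Invariant μ (relComp S T) := by
  intro U hU hUm hU1 hU2
  have hUS : Prod.fst '' U ⊆ Prod.fst '' S := by
    rintro _ ⟨⟨x, y⟩, hxy, rfl⟩
    obtain ⟨w, hxw, -⟩ := hU hxy
    exact ⟨(x, w), hxw, rfl⟩
  set W := _root_.relComp (_root_.relInv S) U
  have hWT : W ⊆ T := by
    rintro ⟨w, y⟩ ⟨x, hxw, hxy⟩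
    obtain ⟨w', hxw', hw'y⟩ := hU hxy
    obtain rfl : w = w' := congrArg Prod.snd (hS1 hxw hxw' rfl)
    exact hw'y
  have hW1 : InjOn Prod.fst W := by
    rintro ⟨w, y⟩ ⟨x, hxw, hxy⟩ ⟨w', y'⟩ ⟨x', hxw', hxy'⟩ (rfl : w = w')
    obtain rfl : x = x' := congrArg Prod.fst (hS2 hxw hxw' rfl)
    obtain rfl : y = y' := congrArg Prod.snd (hU1 hxy hxy' rfl)
    rfl
  have hW2 : InjOn Prod.snd W := by
    rintro ⟨w, y⟩ ⟨x, hxw, hxy⟩ ⟨w', y'⟩ ⟨x', hxw', hxy'⟩ (rfl : y = y')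
    obtain rfl : x = x' := congrArg Prod.fst (hU2 hxy hxy' rfl)
    obtain rfl : w = w' := congrArg Prod.snd (hS1 hxw hxw' rfl)
    rfl
  have hWm : MeasurableSet W := measurableSet_relComp (hSm.preimage measurable_swap) hUm
    fun a ha b hb h => Prod.swap_injective (hS2 ha hb h)
  calc μ (Prod.fst '' U)
      = μ (SetRel.image S (Prod.fst '' U)) :=
        (hS.measure_image hSm hS1 hS2
          (hUm.image_of_continuousOn_injOn continuous_fst.continuousOn hU1) hUS).symm
    _ = μ (Prod.fst '' W) := by rw [image_fst_relComp_relInv]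
    _ = μ (Prod.snd '' W) := hT W hWT hWm hW1 hW2
    _ = μ (Prod.snd '' U) := by rw [image_snd_relComp_relInv hUS]

end Bratteli

namespace BratteliEmb

variable {B D : Bratteli} (E : BratteliEmb B D)

def swapped : BratteliEmb B D where
  xiV := E.xiV
  xi0 := E.xi1
  xi1 := E.xi0
  xiV_inj := E.xiV_inj
  xi0_inj := E.xi1_inj
  xi1_inj := E.xi0_inj
  src_xi0 := E.src_xi1
  tgt_xi0 := E.tgt_xi1
  src_xi1 := E.src_xi0
  tgt_xi1 := E.tgt_xi0
  disjoint01 := fun n f g h => E.disjoint01 n g f h.symm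

/-- `matchRel I Iᶜ` is the graph of the swap `ξ¹(f_k) ↦ ξ⁰(f_k)` at the coordinates `k ∈ I`. -/
def matchRel (I J : Set ℕ) : Set (D.X × D.X) :=
  {z | ∀ k, (k ∈ I → ∃ f, z.1.1 k = E.xi1 k f ∧ z.2.1 k = E.xi0 k f) ∧
    (k ∈ J → z.1.1 k = z.2.1 k)}

variable {E} {I I' J J' : Set ℕ} {z z' : D.X × D.X}

lemma isClosed_matchRel (I J : Set ℕ) : IsClosed (E.matchRel I J) :=
  D.isClosed_setOf_forall_coord fun k a b =>
    (k ∈ I → ∃ f, a = E.xi1 k f ∧ b = E.xi0 k f) ∧ (k ∈ J → a = b)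

lemma matchRel_subset_matchRel (hI : I' ⊆ I) (hJ : J' ⊆ J) :
    E.matchRel I J ⊆ E.matchRel I' J' :=
  fun _ hz k => ⟨fun hk => (hz k).1 (hI hk), fun hk => (hz k).2 (hJ hk)⟩

lemma swapped_matchRel (I J : Set ℕ) : E.swapped.matchRel I J = relInv (E.matchRel I J) := by
  ext z
  simp only [matchRel, relInv, mem_ofPred_eq, swapped]
  exact forall_congr' fun k => and_congr (imp_congr_right fun _ => exists_congr fun _ => and_comm)
    (imp_congr_right fun _ => eq_comm)

lemma matched_coord_eq_iff (hz : z ∈ E.matchRel I J) (hz' : z' ∈ E.matchRel I J') {k : ℕ}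
    (hk : k ∈ I) : z.1.1 k = z'.1.1 k ↔ z.2.1 k = z'.2.1 k := by
  obtain ⟨f, hx, hy⟩ := (hz k).1 hk
  obtain ⟨f', hx', hy'⟩ := (hz' k).1 hk
  rw [hx, hy, hx', hy', (E.xi1_inj k).eq_iff, (E.xi0_inj k).eq_iff]

lemma coord_eq_iff_of_mem_matchRel_compl (hz : z ∈ E.matchRel I Iᶜ)
    (hz' : z' ∈ E.matchRel I Iᶜ) (k : ℕ) : z.1.1 k = z'.1.1 k ↔ z.2.1 k = z'.2.1 k := by
  by_cases hk : k ∈ I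
  · exact matched_coord_eq_iff hz hz' hk
  · rw [(hz k).2 hk, (hz' k).2 hk]

lemma injOn_fst_matchRel_compl (I : Set ℕ) : InjOn Prod.fst (E.matchRel I Iᶜ) :=
  fun _ hz _ hz' h => Prod.ext h <| Subtype.ext <| funext fun k =>
    (coord_eq_iff_of_mem_matchRel_compl hz hz' k).1 (by rw [h])

lemma injOn_snd_matchRel_compl (I : Set ℕ) : InjOn Prod.snd (E.matchRel I Iᶜ) :=
  fun _ hz _ hz' h => Prod.ext (Subtype.ext <| funext fun k =>
    (coord_eq_iff_of_mem_matchRel_compl hz hz' k).2 (by rw [h])) h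

lemma src_tgt_eq_of_mem_matchRel (hz : z ∈ E.matchRel I J) {k : ℕ} (hk : k ∈ I) :
    D.src k (z.2.1 k) = D.src k (z.1.1 k) ∧ D.tgt k (z.2.1 k) = D.tgt k (z.1.1 k) := by
  obtain ⟨f, hx, hy⟩ := (hz k).1 hk
  rw [hx, hy, E.src_xi0, E.src_xi1, E.tgt_xi0, E.tgt_xi1]
  exact ⟨rfl, rfl⟩

/-- Following the partner on `I'` and the original path elsewhere gives a path, because `ξ⁰(f)`
and `ξ¹(f)` have the same source and range. -/
lemma image_fst_matchRel_subset (hI : I' ⊆ I) :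
    Prod.fst '' E.matchRel I J ⊆ Prod.fst '' E.matchRel I' I'ᶜ := by
  classical
  rintro _ ⟨z, hz, rfl⟩
  set y : (k : ℕ) → D.E k := fun k => if k ∈ I' then z.2.1 k else z.1.1 k
  have hy (k : ℕ) : D.src k (y k) = D.src k (z.1.1 k) ∧ D.tgt k (y k) = D.tgt k (z.1.1 k) := by
    by_cases hk : k ∈ I'
    · simpa only [y, if_pos hk] using src_tgt_eq_of_mem_matchRel hz (hI hk)
    · simp only [y, if_neg hk, and_self]
  refine ⟨(z.1, ⟨y, fun k => by rw [(hy k).2, z.1.2 k, (hy (k + 1)).1]⟩), fun k => ⟨fun hk => ?_,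
    fun hk => (if_neg hk).symm⟩, rfl⟩
  obtain ⟨f, hx, hz2⟩ := (hz k).1 (hI hk)
  exact ⟨f, hx, (if_pos hk).trans hz2⟩

lemma matchRel_subset_RE {n : ℕ} (hJ : Ici n ⊆ J) : E.matchRel I J ⊆ D.RE :=
  fun _ hz => D.mem_RE_iff.2 ⟨n, fun k hk => (hz k).2 (hJ hk)⟩

lemma matchRel_Ici_subset_relComp (N : ℕ) :
    E.matchRel (Ici N) ∅ ⊆ relComp (E.matchRel (Ici N) (Ici N)ᶜ) D.RE := by
  intro z hz
  obtain ⟨w, hw, hwz⟩ := image_fst_matchRel_subset le_rfl ⟨z, hz, rfl⟩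
  refine ⟨w.2, hwz ▸ hw, D.mem_RE_iff.2 ⟨N, fun k hk => ?_⟩⟩
  exact (matched_coord_eq_iff hw hz hk).1 (by rw [hwz])

lemma delta_subset (n : ℕ) (p q : (k : ℕ) → D.E k) :
    E.delta n p q ⊆ E.matchRel (Ici (n + 1)) ∅ ∪ D.RE := by
  rintro z ((⟨-, h⟩ | ⟨-, m, -, -, h⟩) | ⟨-, m, -, -, h⟩)
  · exact Or.inl fun k => ⟨h k, False.elim⟩
  · exact Or.inr (D.mem_RE_iff.2 ⟨n + m + 3, fun k hk => h k (by omega)⟩)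
  · exact Or.inr (D.mem_RE_iff.2 ⟨n + m + 2, h⟩)

lemma Rfull_subset :
    E.Rfull ⊆ D.RE ∪ ⋃ N, (E.matchRel (Ici N) ∅ ∪ relInv (E.matchRel (Ici N) ∅)) := by
  rintro z (hz | hz)
  · exact Or.inl hz
  simp only [mem_iUnion] at hz
  obtain ⟨n, p, q, -, -, -, -, hz | hz⟩ := hz
  · rcases delta_subset n p q hz with h | h
    · exact Or.inr (mem_iUnion.2 ⟨n + 1, Or.inl h⟩)
    · exact Or.inl h
  · rcases delta_subset n p q hz with h | h
    · exact Or.inr (mem_iUnion.2 ⟨n + 1, Or.inr h⟩)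
    · exact Or.inl (D.relInv_RE_subset h)

variable {μ : Measure D.X}

lemma measure_le_measure_image_matchRel_Icc (hμ : D.Invariant μ D.RE) {N m : ℕ} {K : Set D.X}
    (hK : MeasurableSet K) (hKN : K ⊆ Prod.fst '' E.matchRel (Ici N) (Ici N)ᶜ) :
    μ K ≤ μ (SetRel.image (E.matchRel (Icc N m) (Ici N)ᶜ) K) := by
  have hswap : D.Invariant μ (E.matchRel (Icc N m) (Icc N m)ᶜ) :=
    hμ.mono (matchRel_subset_RE (n := m + 1) fun k hk => by simp at hk ⊢; omega)
  calc μ K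
      = μ (SetRel.image (E.matchRel (Icc N m) (Icc N m)ᶜ) K) :=
        (hswap.measure_image (isClosed_matchRel _ _).measurableSet (injOn_fst_matchRel_compl _)
          (injOn_snd_matchRel_compl _) hK
          (hKN.trans (image_fst_matchRel_subset Icc_subset_Ici_self))).symm
    _ ≤ μ (SetRel.image (E.matchRel (Icc N m) (Ici N)ᶜ) K) :=
        measure_mono (SetRel.image_subset_image_left
          (matchRel_subset_matchRel le_rfl (compl_subset_compl.2 Icc_subset_Ici_self)))

variable [IsFiniteMeasure μ]

lemma measure_le_measure_image_matchRel_Ici (hμ : D.Invariant μ D.RE) {N : ℕ} {K : Set D.X}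
    (hK : IsCompact K) (hKN : K ⊆ Prod.fst '' E.matchRel (Ici N) (Ici N)ᶜ) :
    μ K ≤ μ (SetRel.image (E.matchRel (Ici N) (Ici N)ᶜ) K) := by
  set H : ℕ → Set (D.X × D.X) := fun m => E.matchRel (Icc N m) (Ici N)ᶜ
  have hH : Antitone H := fun m m' h =>
    matchRel_subset_matchRel (Icc_subset_Icc_right h) le_rfl
  have hHc (m : ℕ) : IsClosed (H m) := isClosed_matchRel _ _
  have hiInter : ⋂ m, H m ⊆ E.matchRel (Ici N) (Ici N)ᶜ := fun z hz k =>
    ⟨fun hk => ((mem_iInter.1 hz k) k).1 ⟨hk, le_rfl⟩, ((mem_iInter.1 hz 0) k).2⟩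
  calc μ K
      ≤ ⨅ m, μ (SetRel.image (H m) K) :=
        le_iInf fun m => measure_le_measure_image_matchRel_Icc hμ hK.measurableSet hKN
    _ = μ (⋂ m, SetRel.image (H m) K) :=
        (Antitone.measure_iInter (fun m m' h => SetRel.image_subset_image_left (hH h))
          (fun m => ((SetRel.isCompact_image (hHc m) hK).isClosed.measurableSet).nullMeasurableSet)
          ⟨0, measure_ne_top μ _⟩).symm
    _ ≤ μ (SetRel.image (E.matchRel (Ici N) (Ici N)ᶜ) K) :=
        measure_mono ((SetRel.iInter_image_subset_image_iInter hH hHc hK).trans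
          (SetRel.image_subset_image_left hiInter))

lemma measure_image_fst_le_of_subset_matchRel_Ici (hμ : D.Invariant μ D.RE) {N : ℕ}
    {U : Set (D.X × D.X)} (hU : U ⊆ E.matchRel (Ici N) (Ici N)ᶜ) (hUm : MeasurableSet U) :
    μ (Prod.fst '' U) ≤ μ (Prod.snd '' U) := by
  have hinj := injOn_fst_matchRel_compl (E := E) (Ici N)
  rw [(hUm.image_of_continuousOn_injOn continuous_fst.continuousOn
    (hinj.mono hU)).measure_eq_iSup_isCompact]
  refine iSup₂_le fun K hKU => iSup_le fun hK => ?_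
  refine (measure_le_measure_image_matchRel_Ici hμ hK (hKU.trans (image_mono hU))).trans
    (measure_mono ?_)
  rintro y ⟨x, hxK, hxy⟩
  obtain ⟨z, hz, rfl⟩ := hKU hxK
  exact ⟨z, hz, congrArg Prod.snd (hinj (hU hz) hxy rfl)⟩

lemma invariant_matchRel_Ici (hμ : D.Invariant μ D.RE) (N : ℕ) :
    D.Invariant μ (E.matchRel (Ici N) (Ici N)ᶜ) := by
  intro U hU hUm _ _
  refine le_antisymm (measure_image_fst_le_of_subset_matchRel_Ici hμ hU hUm) ?_
  have := measure_image_fst_le_of_subset_matchRel_Ici (E := E.swapped) hμ (U := Prod.swap '' U)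
    (by rw [swapped_matchRel]; rintro _ ⟨z, hz, rfl⟩; exact hU hz)
    (by rw [image_swap_eq_preimage_swap]; exact hUm.preimage measurable_swap)
  simpa only [image_image, Prod.fst_swap, Prod.snd_swap] using this

lemma invariant_matchRel_Ici_empty (hμ : D.Invariant μ D.RE) (N : ℕ) :
    D.Invariant μ (E.matchRel (Ici N) ∅) :=
  ((invariant_matchRel_Ici hμ N).relComp (isClosed_matchRel _ _).measurableSet
    (injOn_fst_matchRel_compl _) (injOn_snd_matchRel_compl _) hμ).mono
    (matchRel_Ici_subset_relComp N)

end BratteliEmb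

/-- A Borel probability measure on `X_E` is `R`-invariant if and only if
it is `R_E`-invariant. -/
theorem stmt13 (B D : Bratteli) (E : BratteliEmb B D)
    (μ : Measure D.X) [IsProbabilityMeasure μ] :
    D.Invariant μ E.Rfull ↔ D.Invariant μ D.RE := by
  refine ⟨fun h => h.mono subset_union_left, fun hμ => ?_⟩
  set M : ℕ → Set (D.X × D.X) := fun N => E.matchRel (Ici N) ∅
  have hMm (N : ℕ) : MeasurableSet (M N) := (BratteliEmb.isClosed_matchRel _ _).measurableSet
  have hMinvm (N : ℕ) : MeasurableSet (relInv (M N)) := (hMm N).preimage measurable_swap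
  have hM (N : ℕ) : D.Invariant μ (M N) := BratteliEmb.invariant_matchRel_Ici_empty hμ N
  have hMMm (N : ℕ) : MeasurableSet (M N ∪ relInv (M N)) := (hMm N).union (hMinvm N)
  have hMM (N : ℕ) : D.Invariant μ (M N ∪ relInv (M N)) :=
    (hM N).union (hM N).relInv (hMm N) (hMinvm N)
  exact (hμ.union (.iUnion hMMm hMM) D.measurableSet_RE (.iUnion hMMm)).mono E.Rfull_subset
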